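/- arXiv:2401.13168 — 3 statements merged into one kernel-verified Lean document; each statement's English description precedes it below -/
import Mathlib

section
/- Fix f0 ∈ (1/2, 1] and let D := √(7 − 26·f0 + 28·f0²). For r ≥ 1 define α_r := −(1 − 4·f0 + 6·f0²)·((2 + 4·f0 − D)^r − (2 + 4·f0 + D)^r) + f0·D·((2 + 4·f0 − D)^r + (2 + 4·f0 + D)^r) and β_r := −(3 − 8·f0 + 8·f0²)·((2 + 4·f0 − D)^r − (2 + 4·f0 + D)^r) + D·((2 + 4·f0 − D)^r + (2 + 4·f0 + D)^r). Then for every r ≥ 1 one has β_r ≠ 0 and the pumping-policy fidelity sequence satisfies f_r = α_r / β_r. -/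
/-!
The pair `(α_r, β_r)` is the orbit of `(f0, 1)` (up to the factor `2D`) under the matrix
`M = [[a1, a2], [a3, a4]]`: its eigenvalues are `2 + 4 f0 ± D`, so the closed forms satisfy
`(α, β)_{r+1} = M (α, β)_r`. Since `M` has nonnegative entries and `a4 > 0`, every `β_r` is
positive, and the Möbius map defined by `M` sends `α_r / β_r` to `α_{r+1} / β_{r+1}`.
-/

/-- The pumping-policy fidelity sequence: `f 0 = f0` and
`f (r+1) = ((10 f0 - 1) f r + (1 - f0)) / ((8 f0 - 2) f r + (5 - 2 f0))`. -/
noncomputable def pumping (f0 : ℝ) : ℕ → ℝ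
  | 0 => f0
  | r + 1 =>
      ((10 * f0 - 1) * pumping f0 r + (1 - f0)) /
        ((8 * f0 - 2) * pumping f0 r + (5 - 2 * f0))

section LinearRecurrence

variable {x y : ℕ → ℝ} {a b c d : ℝ}

theorem nonneg_and_pos_of_linear_recurrence (ha : 0 ≤ a) (hb : 0 ≤ b) (hc : 0 ≤ c) (hd : 0 < d)
    (hx : ∀ r, x (r + 1) = a * x r + b * y r) (hy : ∀ r, y (r + 1) = c * x r + d * y r)
    (hx0 : 0 ≤ x 0) (hy0 : 0 < y 0) (r : ℕ) : 0 ≤ x r ∧ 0 < y r := by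
  induction r with
  | zero => exact ⟨hx0, hy0⟩
  | succ r ih =>
    obtain ⟨hxr, hyr⟩ := ih
    rw [hx, hy]
    exact ⟨by positivity, by positivity⟩

theorem mobius_div_eq {K : Type*} [Field K] {a b c d p q : K} (hq : q ≠ 0) :
    (a * (p / q) + b) / (c * (p / q) + d) = (a * p + b * q) / (c * p + d * q) := by
  rw [← mul_div_mul_right _ _ hq]
  congr 1 <;> field_simp

theorem eq_div_of_linear_recurrence {g : ℕ → ℝ}
    (hg : ∀ r, g (r + 1) = (a * g r + b) / (c * g r + d))
    (hx : ∀ r, x (r + 1) = a * x r + b * y r) (hy : ∀ r, y (r + 1) = c * x r + d * y r)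
    (hy_ne : ∀ r, y r ≠ 0) (hg0 : g 0 = x 0 / y 0) (r : ℕ) : g r = x r / y r := by
  induction r with
  | zero => exact hg0
  | succ r ih => rw [hg, ih, mobius_div_eq (hy_ne r), hx, hy]

end LinearRecurrence

section ClosedForm

variable {f0 D : ℝ}

theorem pumping_succ (r : ℕ) :
    pumping f0 (r + 1) =
      ((10 * f0 - 1) * pumping f0 r + (1 - f0)) / ((8 * f0 - 2) * pumping f0 r + (5 - 2 * f0)) :=
  rfl

theorem sqrt_discriminant_pos (f0 : ℝ) : 0 < Real.sqrt (7 - 26 * f0 + 28 * f0 ^ 2) :=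
  Real.sqrt_pos.mpr (by nlinarith [sq_nonneg (f0 - 13 / 28)])

theorem sq_sqrt_discriminant (f0 : ℝ) :
    Real.sqrt (7 - 26 * f0 + 28 * f0 ^ 2) ^ 2 = 7 - 26 * f0 + 28 * f0 ^ 2 :=
  Real.sq_sqrt (by nlinarith [sq_nonneg (f0 - 13 / 28)])

theorem closedForm_num_succ (hD : D ^ 2 = 7 - 26 * f0 + 28 * f0 ^ 2) (r : ℕ) :
    -(1 - 4 * f0 + 6 * f0 ^ 2) * ((2 + 4 * f0 - D) ^ (r + 1) - (2 + 4 * f0 + D) ^ (r + 1))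
        + f0 * D * ((2 + 4 * f0 - D) ^ (r + 1) + (2 + 4 * f0 + D) ^ (r + 1)) =
      (10 * f0 - 1) *
          (-(1 - 4 * f0 + 6 * f0 ^ 2) * ((2 + 4 * f0 - D) ^ r - (2 + 4 * f0 + D) ^ r)
            + f0 * D * ((2 + 4 * f0 - D) ^ r + (2 + 4 * f0 + D) ^ r))
        + (1 - f0) *
          (-(3 - 8 * f0 + 8 * f0 ^ 2) * ((2 + 4 * f0 - D) ^ r - (2 + 4 * f0 + D) ^ r)
            + D * ((2 + 4 * f0 - D) ^ r + (2 + 4 * f0 + D) ^ r)) := by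
  rw [pow_succ, pow_succ]
  linear_combination f0 * ((2 + 4 * f0 + D) ^ r - (2 + 4 * f0 - D) ^ r) * hD

theorem closedForm_den_succ (hD : D ^ 2 = 7 - 26 * f0 + 28 * f0 ^ 2) (r : ℕ) :
    -(3 - 8 * f0 + 8 * f0 ^ 2) * ((2 + 4 * f0 - D) ^ (r + 1) - (2 + 4 * f0 + D) ^ (r + 1))
        + D * ((2 + 4 * f0 - D) ^ (r + 1) + (2 + 4 * f0 + D) ^ (r + 1)) =
      (8 * f0 - 2) *
          (-(1 - 4 * f0 + 6 * f0 ^ 2) * ((2 + 4 * f0 - D) ^ r - (2 + 4 * f0 + D) ^ r)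
            + f0 * D * ((2 + 4 * f0 - D) ^ r + (2 + 4 * f0 + D) ^ r))
        + (5 - 2 * f0) *
          (-(3 - 8 * f0 + 8 * f0 ^ 2) * ((2 + 4 * f0 - D) ^ r - (2 + 4 * f0 + D) ^ r)
            + D * ((2 + 4 * f0 - D) ^ r + (2 + 4 * f0 + D) ^ r)) := by
  rw [pow_succ, pow_succ]
  linear_combination ((2 + 4 * f0 + D) ^ r - (2 + 4 * f0 - D) ^ r) * hD

end ClosedForm

theorem stmt_1 (f0 : ℝ) (hf0 : f0 ∈ Set.Ioc (1/2 : ℝ) 1)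
    (D : ℝ) (hD : D = Real.sqrt (7 - 26 * f0 + 28 * f0 ^ 2))
    (α β : ℕ → ℝ)
    (hα : ∀ r : ℕ, α r =
      -(1 - 4 * f0 + 6 * f0 ^ 2) * ((2 + 4 * f0 - D) ^ r - (2 + 4 * f0 + D) ^ r)
        + f0 * D * ((2 + 4 * f0 - D) ^ r + (2 + 4 * f0 + D) ^ r))
    (hβ : ∀ r : ℕ, β r =
      -(3 - 8 * f0 + 8 * f0 ^ 2) * ((2 + 4 * f0 - D) ^ r - (2 + 4 * f0 + D) ^ r)
        + D * ((2 + 4 * f0 - D) ^ r + (2 + 4 * f0 + D) ^ r)) :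
    ∀ r : ℕ, 1 ≤ r → β r ≠ 0 ∧ pumping f0 r = α r / β r := by
  obtain ⟨hf0_gt, hf0_le⟩ := hf0
  have hD_pos : 0 < D := hD ▸ sqrt_discriminant_pos f0
  have hD_sq : D ^ 2 = 7 - 26 * f0 + 28 * f0 ^ 2 := hD ▸ sq_sqrt_discriminant f0
  have hα_succ : ∀ r, α (r + 1) = (10 * f0 - 1) * α r + (1 - f0) * β r := fun r => by
    rw [hα, hα, hβ]; exact closedForm_num_succ hD_sq r
  have hβ_succ : ∀ r, β (r + 1) = (8 * f0 - 2) * α r + (5 - 2 * f0) * β r := fun r => by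
    rw [hα, hβ, hβ]; exact closedForm_den_succ hD_sq r
  have hα0 : α 0 = 2 * f0 * D := by rw [hα]; ring
  have hβ0 : β 0 = 2 * D := by rw [hβ]; ring
  have hβ_pos : ∀ r, 0 < β r := fun r =>
    (nonneg_and_pos_of_linear_recurrence (by linarith) (by linarith) (by linarith) (by linarith)
      hα_succ hβ_succ (by rw [hα0]; positivity) (by rw [hβ0]; positivity) r).2
  have hpumping : ∀ r, pumping f0 r = α r / β r :=
    eq_div_of_linear_recurrence pumping_succ hα_succ hβ_succ (fun r => (hβ_pos r).ne')
      (show f0 = α 0 / β 0 by rw [hα0, hβ0]; field_simp)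
  exact fun r _ => ⟨(hβ_pos r).ne', hpumping r⟩
end

section
/- Fix f0 ∈ (1/2, 1]. The pumping-policy fidelity sequence (f_r)_{r≥0} converges, and lim_{r→∞} f_r = (−3 + 6·f0 + √(7 − 26·f0 + 28·f0²)) / (−2 + 8·f0). -/
open Filter Topology

theorem tendsto_of_dist_succ_le_mul {α : Type*} [PseudoMetricSpace α] {u : ℕ → α} {x : α}
    {c : ℝ} (hc0 : 0 ≤ c) (hc1 : c < 1) (h : ∀ n, dist (u (n + 1)) x ≤ c * dist (u n) x) :
    Tendsto u atTop (𝓝 x) := by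
  have hgeom : ∀ n, dist (u n) x ≤ dist (u 0) x * c ^ n := by
    intro n
    induction n with
    | zero => simp
    | succ n ih =>
      calc dist (u (n + 1)) x ≤ c * dist (u n) x := h n
        _ ≤ c * (dist (u 0) x * c ^ n) := mul_le_mul_of_nonneg_left ih hc0
        _ = dist (u 0) x * c ^ (n + 1) := by ring
  rw [tendsto_iff_dist_tendsto_zero]
  refine squeeze_zero (fun _ => dist_nonneg) hgeom ?_
  simpa using (tendsto_pow_atTop_nhds_zero_of_lt_one hc0 hc1).const_mul (dist (u 0) x)

theorem linearFractional_sub_fixedPoint {a b c d L x : ℝ} (hL : a * L + b = L * (c * L + d))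
    (hx : c * x + d ≠ 0) :
    (a * x + b) / (c * x + d) - L = (a - c * L) / (c * x + d) * (x - L) := by
  rw [div_mul_eq_mul_div, div_sub' hx]
  congr 1
  linear_combination hL

noncomputable def pumpingLimit (f0 : ℝ) : ℝ :=
  (-3 + 6 * f0 + √(7 - 26 * f0 + 28 * f0 ^ 2)) / (-2 + 8 * f0)

section Pumping

variable {f0 : ℝ}

theorem half_lt_pumping (hf0 : 1 / 2 < f0) (r : ℕ) : 1 / 2 < pumping f0 r := by
  induction r with
  | zero => exact hf0
  | succ r ih =>
    have hden : 0 < (8 * f0 - 2) * pumping f0 r + (5 - 2 * f0) := by nlinarith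
    rw [pumping, lt_div_iff₀ hden]
    nlinarith

theorem pumping_denom_ge (hf0 : 1 / 2 < f0) (r : ℕ) :
    2 * f0 + 4 ≤ (8 * f0 - 2) * pumping f0 r + (5 - 2 * f0) := by
  nlinarith [half_lt_pumping hf0 r]

theorem pumping_discr_pos (f0 : ℝ) : 0 < 7 - 26 * f0 + 28 * f0 ^ 2 := by
  nlinarith [sq_nonneg (f0 - 13 / 28)]

theorem pumping_sqrt_discr_lt (hf0 : f0 ∈ Set.Ioc (1 / 2 : ℝ) 1) :
    √(7 - 26 * f0 + 28 * f0 ^ 2) < 4 * f0 + 2 := by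
  obtain ⟨h1, h2⟩ := hf0
  exact (Real.sqrt_lt' (by linarith)).mpr (by nlinarith)

theorem mul_pumpingLimit (hf0 : 1 / 2 < f0) :
    (-2 + 8 * f0) * pumpingLimit f0 = -3 + 6 * f0 + √(7 - 26 * f0 + 28 * f0 ^ 2) :=
  mul_div_cancel₀ _ (by linarith)

theorem pumpingLimit_isFixedPt (hf0 : 1 / 2 < f0) :
    (10 * f0 - 1) * pumpingLimit f0 + (1 - f0) =
      pumpingLimit f0 * ((8 * f0 - 2) * pumpingLimit f0 + (5 - 2 * f0)) := by
  have hs := Real.sq_sqrt (pumping_discr_pos f0).le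
  have hL := mul_pumpingLimit hf0
  -- After multiplying by `8 f0 - 2`, this is the quadratic formula: it reduces to `(√D)² = D`.
  refine mul_left_cancel₀ (by linarith : -2 + 8 * f0 ≠ 0) ?_
  linear_combination (-((-2 + 8 * f0) * pumpingLimit f0 +
    (-3 + 6 * f0 + √(7 - 26 * f0 + 28 * f0 ^ 2))) - (6 - 12 * f0)) * hL - hs

theorem pumping_succ_sub_pumpingLimit (hf0 : 1 / 2 < f0) (r : ℕ) :
    pumping f0 (r + 1) - pumpingLimit f0 =
      (4 * f0 + 2 - √(7 - 26 * f0 + 28 * f0 ^ 2)) /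
        ((8 * f0 - 2) * pumping f0 r + (5 - 2 * f0)) * (pumping f0 r - pumpingLimit f0) := by
  have hden : (8 * f0 - 2) * pumping f0 r + (5 - 2 * f0) ≠ 0 := by
    linarith [pumping_denom_ge hf0 r]
  rw [pumping, linearFractional_sub_fixedPoint (pumpingLimit_isFixedPt hf0) hden]
  congr 2
  linear_combination -mul_pumpingLimit hf0

theorem dist_pumping_succ_le (hf0 : f0 ∈ Set.Ioc (1 / 2 : ℝ) 1) (r : ℕ) :
    dist (pumping f0 (r + 1)) (pumpingLimit f0) ≤
      (4 * f0 + 2 - √(7 - 26 * f0 + 28 * f0 ^ 2)) / (2 * f0 + 4) *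
        dist (pumping f0 r) (pumpingLimit f0) := by
  have hfactor : 0 ≤ 4 * f0 + 2 - √(7 - 26 * f0 + 28 * f0 ^ 2) := by
    linarith [pumping_sqrt_discr_lt hf0]
  have hden := pumping_denom_ge hf0.1 r
  rw [Real.dist_eq, Real.dist_eq, pumping_succ_sub_pumpingLimit hf0.1, abs_mul,
    abs_of_nonneg (div_nonneg hfactor (by linarith [hf0.1]))]
  gcongr
  linarith [hf0.1]

end Pumping

theorem stmt_2 (f0 : ℝ) (hf0 : f0 ∈ Set.Ioc (1/2 : ℝ) 1) :
    Filter.Tendsto (pumping f0) Filter.atTop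
      (nhds ((-3 + 6 * f0 + Real.sqrt (7 - 26 * f0 + 28 * f0 ^ 2)) / (-2 + 8 * f0))) := by
  have hsqrt_lt := pumping_sqrt_discr_lt hf0
  have hsqrt_pos := Real.sqrt_pos.mpr (pumping_discr_pos f0)
  refine tendsto_of_dist_succ_le_mul ?_ ?_ (dist_pumping_succ_le hf0)
  · exact div_nonneg (by linarith) (by linarith [hf0.1])
  · rw [div_lt_one (by linarith [hf0.1])]
    linarith [hf0.2]
end

section
/- For every f0 ∈ (1/2, 1), the limiting pumping fidelity satisfies (−3 + 6·f0 + √(7 − 26·f0 + 28·f0²)) / (−2 + 8·f0) < 1. In particular, with the pumping policy it is not possible to distill links to fidelity arbitrarily close to 1 when the fresh-link fidelity f0 is strictly below 1. -/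
theorem stmt_3 (f0 : ℝ) (hf0 : f0 ∈ Set.Ioo (1/2 : ℝ) 1) :
    (-3 + 6 * f0 + Real.sqrt (7 - 26 * f0 + 28 * f0 ^ 2)) / (-2 + 8 * f0) < 1 := by
  obtain ⟨h1, h2⟩ := hf0
  have hd : (0:ℝ) < -2 + 8 * f0 := by linarith
  rw [div_lt_one hd]
  have hs : Real.sqrt (7 - 26 * f0 + 28 * f0 ^ 2) < 1 + 2 * f0 := by
    rw [show (1 + 2 * f0 : ℝ) = Real.sqrt ((1 + 2 * f0)^2) from
      (Real.sqrt_sq (by linarith)).symm]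
    apply Real.sqrt_lt_sqrt (by nlinarith)
    nlinarith
  linarith
end
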